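/- arXiv:2109.06593 — 2 statements merged into one kernel-verified Lean document; each statement's English description precedes it below -/
import Mathlib

section
/- If from a state γ₁ to a state γ₂ of a directed graph (automaton) there exist walks of lengths p₁ and p₁+1, and from γ₂ to γ₁ there exist walks of lengths p₂ and p₂+1, then for every d ≥ (p₁+p₂)(p₁+p₂−1) + max(p₁,p₂) there exist walks from γ₁ to γ₂ and from γ₂ to γ₁ of length exactly d. -/
/-- A walk of length `d` from `a` to `b` in the directed graph with edge relation `E`. -/
def HasWalk {V : Type*} (E : V → V → Prop) : ℕ → V → V → Prop
  | 0, a, b => a = b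
  | n + 1, a, b => ∃ c, E a c ∧ HasWalk E n c b

lemma hasWalk_trans {V : Type*} (E : V → V → Prop) :
    ∀ {m n : ℕ} {a b c : V}, HasWalk E m a b → HasWalk E n b c → HasWalk E (m + n) a c := by
  intro m
  induction m with
  | zero => intro n a b c h h'; cases h; simpa using h'
  | succ m ih =>
    intro n a b c h h'
    obtain ⟨x, hx, hw⟩ := h
    rw [Nat.succ_add]
    exact ⟨x, hx, ih hw h'⟩

lemma hasWalk_mul {V : Type*} (E : V → V → Prop) {k : ℕ} {v : V}
    (h : HasWalk E k v v) : ∀ a : ℕ, HasWalk E (a * k) v v := by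
  intro a
  induction a with
  | zero => exact (by simp : HasWalk E 0 v v → HasWalk E (0 * k) v v) rfl
  | succ a ih =>
    have := hasWalk_trans E ih h
    rwa [show a * k + k = (a + 1) * k by ring] at this

lemma rep {n m : ℕ} (hm : n * (n - 1) ≤ m) : ∃ a b, m = a * n + b * (n + 1) := by
  rcases Nat.eq_zero_or_pos n with h0 | hpos
  · exact ⟨0, m, by simp [h0]⟩
  · obtain ⟨q, r, hr, hqr⟩ : ∃ q r, r < n ∧ m = q * n + r :=
      ⟨m / n, m % n, Nat.mod_lt _ hpos, by rw [Nat.div_add_mod' m n]⟩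
    have hq : r ≤ q := by nlinarith [Nat.sub_add_cancel hpos]
    exact ⟨q - r, r, by rw [hqr]; have := Nat.sub_add_cancel hq; nlinarith⟩

lemma closed_all {V : Type*} (E : V → V → Prop) {n : ℕ} {v : V}
    (h : HasWalk E n v v) (h' : HasWalk E (n + 1) v v) :
    ∀ m, n * (n - 1) ≤ m → HasWalk E m v v := by
  intro m hm
  obtain ⟨a, b, rfl⟩ := rep hm
  exact hasWalk_trans E (hasWalk_mul E h a) (hasWalk_mul E h' b)

/-- If from γ₁ to γ₂ there are walks of lengths p₁ and p₁+1, and from γ₂ to γ₁ there are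
walks of lengths p₂ and p₂+1, then for every d ≥ (p₁+p₂)(p₁+p₂−1) + max(p₁,p₂) there are
walks γ₁⇝γ₂ and γ₂⇝γ₁ of length exactly d. -/
theorem stmt0 {V : Type*} [Fintype V] (E : V → V → Prop) (γ₁ γ₂ : V) (p₁ p₂ : ℕ)
    (h1 : HasWalk E p₁ γ₁ γ₂) (h1' : HasWalk E (p₁ + 1) γ₁ γ₂)
    (h2 : HasWalk E p₂ γ₂ γ₁) (h2' : HasWalk E (p₂ + 1) γ₂ γ₁) :
    ∀ d : ℕ, (p₁ + p₂) * (p₁ + p₂ - 1) + max p₁ p₂ ≤ d →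
      HasWalk E d γ₁ γ₂ ∧ HasWalk E d γ₂ γ₁ := by
  intro d hd
  set n := p₁ + p₂ with hn
  have c1 : HasWalk E n γ₁ γ₁ := hasWalk_trans E h1 h2
  have c1' : HasWalk E (n + 1) γ₁ γ₁ := by
    have := hasWalk_trans E h1 h2'
    rwa [show p₁ + (p₂ + 1) = n + 1 by omega] at this
  have c2 : HasWalk E n γ₂ γ₂ := by
    have := hasWalk_trans E h2 h1
    rwa [show p₂ + p₁ = n by omega] at this
  have c2' : HasWalk E (n + 1) γ₂ γ₂ := by
    have := hasWalk_trans E h2 h1'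
    rwa [show p₂ + (p₁ + 1) = n + 1 by omega] at this
  constructor
  · have hle : n * (n - 1) ≤ d - p₁ := by omega
    have := hasWalk_trans E (closed_all E c1 c1' (d - p₁) hle) h1
    rwa [show d - p₁ + p₁ = d by omega] at this
  · have hle : n * (n - 1) ≤ d - p₂ := by omega
    have := hasWalk_trans E (closed_all E c2 c2' (d - p₂) hle) h2
    rwa [show d - p₂ + p₂ = d by omega] at this
end

section
/- For every pair of natural numbers g and k, there exists a finite graph whose girth is at least g and whose chromatic number is at least k. -/
/-!
Erdős's deletion argument. Let `M = 6k + 2`, `n = M ^ (2g + 2)` and let every pair of `n`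
vertices be an edge independently with probability `p = M² / n`. The expected number of cycles
of length `< g` is at most `∑_{ℓ < g} (np)^ℓ ≤ n / 4`, so by Markov's inequality there are fewer
than `n / 2` of them with probability at least `1/2`; an independent set of size
`t = 3 M ^ (2g + 1)` exists with probability at most `2ⁿ (1 - p)^(t choose 2) < 1/2`. Fix an
outcome with neither defect and delete one vertex of every short cycle: what remains has girth
at least `g`, more than `n / 2` vertices and no independent set of size `t`, hence chromatic
number greater than `n / (2t) ≥ k`.
-/

open Finset

namespace BernoulliProduct

variable {ι : Type*} [Fintype ι] {p : ℝ}

noncomputable def weight (p : ℝ) (ω : ι → Bool) : ℝ := ∏ i, if ω i then p else 1 - p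

lemma weight_nonneg (hp₀ : 0 ≤ p) (hp₁ : p ≤ 1) (ω : ι → Bool) : 0 ≤ weight p ω :=
  prod_nonneg fun i _ => by split <;> linarith

variable [DecidableEq ι]

noncomputable def prob (p : ℝ) (A : (ι → Bool) → Prop) : ℝ :=
  ∑ ω, {ω | A ω}.indicator (weight p) ω

lemma sum_weight (p : ℝ) : ∑ ω : ι → Bool, weight p ω = 1 := by
  simp only [weight]
  rw [← Fintype.prod_sum (fun (_ : ι) (c : Bool) => if c then p else 1 - p)]
  simp

lemma prob_mono (hp₀ : 0 ≤ p) (hp₁ : p ≤ 1) {A B : (ι → Bool) → Prop}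
    (h : ∀ ω, A ω → B ω) :
    prob p A ≤ prob p B :=
  sum_le_sum fun ω _ => Set.indicator_le_indicator_of_subset (fun ω => h ω)
    (weight_nonneg hp₀ hp₁) ω

lemma prob_or_le (hp₀ : 0 ≤ p) (hp₁ : p ≤ 1) (A B : (ι → Bool) → Prop) :
    prob p (fun ω => A ω ∨ B ω) ≤ prob p A + prob p B := by
  classical
  simp only [prob, Set.indicator_apply, Set.mem_ofPred_eq, ← sum_add_distrib]
  refine sum_le_sum fun ω _ => ?_
  have := weight_nonneg hp₀ hp₁ ω
  split_ifs <;> simp_all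

lemma prob_exists_le (hp₀ : 0 ≤ p) (hp₁ : p ≤ 1) {α : Type*} (s : Finset α)
    (A : α → (ι → Bool) → Prop) :
    prob p (fun ω => ∃ a ∈ s, A a ω) ≤ ∑ a ∈ s, prob p (A a) := by
  classical
  simp only [prob, Set.indicator_apply, Set.mem_ofPred_eq]
  rw [sum_comm]
  refine sum_le_sum fun ω _ => ?_
  have hw := weight_nonneg hp₀ hp₁ ω
  have hnonneg : ∀ b ∈ s, 0 ≤ if A b ω then weight p ω else 0 := fun b _ => by
    split <;> simp [hw]
  split_ifs with h
  · obtain ⟨a, ha, hA⟩ := h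
    simpa [hA] using single_le_sum hnonneg ha
  · exact sum_nonneg hnonneg

lemma prob_forall_eq (F : Finset ι) (b : Bool) :
    prob p (fun ω => ∀ i ∈ F, ω i = b) = (if b then p else 1 - p) ^ #F := by
  have hfactor : ∀ ω : ι → Bool, (if ∀ i ∈ F, ω i = b then weight p ω else 0) =
      ∏ i, if i ∈ F ∧ ω i ≠ b then 0 else if ω i then p else 1 - p := by
    intro ω
    split_ifs with h
    · exact prod_congr rfl fun i _ =>
        (if_neg fun hi : i ∈ F ∧ ω i ≠ b => hi.2 (h i hi.1)).symm
    · push Not at h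
      obtain ⟨i, hi, hne⟩ := h
      exact (prod_eq_zero (mem_univ i) (by simp [hi, hne])).symm
  have hsum : ∀ i, (∑ c : Bool, if i ∈ F ∧ c ≠ b then 0 else if c then p else 1 - p) =
      if i ∈ F then (if b then p else 1 - p) else 1 := by
    intro i
    by_cases hi : i ∈ F <;> cases b <;> simp [hi]
  simp only [prob, Set.indicator_apply, Set.mem_ofPred_eq, hfactor]
  -- the summand now factors over the coordinates
  rw [← Fintype.prod_sum (fun i c => if i ∈ F ∧ c ≠ b then 0 else if c then p else 1 - p)]
  simp only [hsum, prod_ite_mem, univ_inter, prod_const]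

lemma prob_le_div_of_nonneg (hp₀ : 0 ≤ p) (hp₁ : p ≤ 1) {X : (ι → Bool) → ℝ}
    (hX : ∀ ω, 0 ≤ X ω) {a : ℝ} (ha : 0 < a) :
    prob p (fun ω => a ≤ X ω) ≤ (∑ ω, weight p ω * X ω) / a := by
  classical
  simp only [prob, Set.indicator_apply, Set.mem_ofPred_eq, sum_div]
  refine sum_le_sum fun ω _ => ?_
  have hw := weight_nonneg hp₀ hp₁ ω
  split_ifs with h
  · rw [le_div_iff₀ ha]
    exact mul_le_mul_of_nonneg_left h hw
  · exact div_nonneg (mul_nonneg hw (hX ω)) ha.le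

lemma sum_weight_mul_card_filter {α : Type*} (s : Finset α) (A : α → (ι → Bool) → Prop)
    [∀ a ω, Decidable (A a ω)] :
    ∑ ω, weight p ω * #{a ∈ s | A a ω} = ∑ a ∈ s, prob p (A a) := by
  simp only [prob, Set.indicator_apply, Set.mem_ofPred_eq, card_filter, Nat.cast_sum, mul_sum]
  rw [sum_comm]
  refine sum_congr rfl fun a _ => sum_congr rfl fun ω _ => ?_
  split_ifs <;> simp

lemma exists_not_of_prob_lt_one {A : (ι → Bool) → Prop} (h : prob p A < 1) :
    ∃ ω, ¬ A ω := by
  by_contra! hA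
  simp [prob, hA, sum_weight] at h

end BernoulliProduct

lemma two_pow_mul_exp_neg_lt (n : ℕ) {x : ℝ} (hx : n + 1 ≤ x) :
    2 ^ n * Real.exp (-x) < 1 / 2 := by
  have he : Real.exp (-1) < 1 / 2 := by
    rw [Real.exp_neg, one_div]
    exact inv_strictAnti₀ two_pos (by linarith [Real.add_one_lt_exp one_ne_zero])
  calc 2 ^ n * Real.exp (-x) ≤ 2 ^ n * Real.exp (-1) ^ (n + 1) := by
        rw [← Real.exp_nat_mul]
        gcongr
        push_cast
        linarith
    _ < 2 ^ n * (1 / 2) ^ (n + 1) := by gcongr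
    _ = 1 / 2 := by rw [pow_succ, ← mul_assoc, ← mul_pow]; norm_num

lemma four_mul_sum_pow_le {N g : ℕ} (hN : 4 ≤ N) {s : Finset ℕ} (hs : ∀ ℓ ∈ s, ℓ < g) :
    4 * ∑ ℓ ∈ s, (N : ℝ) ^ ℓ ≤ (N : ℝ) ^ (g + 1) := by
  have h : ∑ ℓ ∈ s, N ^ ℓ < N ^ g := Nat.geomSum_lt (by omega) hs
  have : 4 * ∑ ℓ ∈ s, N ^ ℓ ≤ N ^ (g + 1) := by
    have := Nat.mul_le_mul_left (N ^ g) hN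
    rw [pow_succ]
    omega
  exact_mod_cast this

lemma three_mul_sq_le_choose_two (a : ℕ) : 3 * a ^ 2 ≤ (3 * a).choose 2 := by
  rw [Nat.choose_two_right, Nat.le_div_iff_mul_le two_pos]
  rcases a with _ | a
  · simp
  · have : 3 * (a + 1) - 1 = 3 * a + 2 := by omega
    rw [this]
    nlinarith

open Function

lemma Finset.exists_card_le_forall_exists_mem {α β : Type*} [DecidableEq β] (S : Finset α)
    {r : α → β → Prop} (h : ∀ a ∈ S, ∃ b, r a b) :
    ∃ D : Finset β, #D ≤ #S ∧ ∀ a ∈ S, ∃ b ∈ D, r a b := by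
  choose f hf using h
  refine ⟨S.attach.image fun a => f a.1 a.2, card_image_le.trans card_attach.le,
    fun a ha => ⟨f a ha, mem_image.mpr ⟨⟨a, ha⟩, mem_attach _ _, rfl⟩, hf a ha⟩⟩

lemma val_finRotate {ℓ : ℕ} (j : Fin ℓ) :
    (finRotate ℓ j : ℕ) = if (j : ℕ) + 1 = ℓ then 0 else (j : ℕ) + 1 := by
  obtain ⟨m, rfl⟩ : ∃ m, ℓ = m + 1 := ⟨ℓ - 1, by have := j.2; omega⟩
  rw [coe_finRotate]
  simp [Fin.ext_iff]

namespace SimpleGraph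

variable {V : Type*} {G : SimpleGraph V}

lemma Colorable.card_le_mul_indepNum [Fintype V] {c : ℕ} (hc : G.Colorable c) :
    Fintype.card V ≤ c * G.indepNum := by
  classical
  obtain ⟨C⟩ := hc
  calc Fintype.card V = ∑ j : Fin c, #{v | C v = j} :=
        card_eq_sum_card_fiberwise fun v _ => mem_univ (C v)
    _ ≤ ∑ _j : Fin c, G.indepNum := sum_le_sum fun j _ => IsIndepSet.card_le_indepNum
        fun v hv w hw _ => C.not_adj_of_mem_colorClass (c := j) (mem_filter.mp hv).2
          (mem_filter.mp hw).2
    _ = c * G.indepNum := by simp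

lemma indepNum_induce_le [Finite V] (s : Set V) : (G.induce s).indepNum ≤ G.indepNum := by
  obtain ⟨t, ht⟩ := (G.induce s).exists_isNIndepSet_indepNum
  rw [← ht.card_eq, ← card_map (Embedding.subtype _)]
  refine IsIndepSet.card_le_indepNum ?_
  rintro _ hv _ hw hne hadj
  simp only [coe_map, Embedding.subtype_apply, Set.mem_image, mem_coe] at hv hw
  obtain ⟨v, hv, rfl⟩ := hv
  obtain ⟨w, hw, rfl⟩ := hw
  exact ht.isIndepSet hv hw (fun h => hne (congrArg Subtype.val h)) hadj

lemma exists_isNIndepSet_of_le_indepNum {t : ℕ} (h : t ≤ G.indepNum) :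
    ∃ s, G.IsNIndepSet t s := by
  obtain ⟨s, hs⟩ := G.exists_isNIndepSet_indepNum
  obtain ⟨u, hus, hu⟩ := exists_subset_card_eq (hs.card_eq ▸ h)
  exact ⟨u, hs.isIndepSet.mono (coe_subset.mpr hus), hu⟩

variable [DecidableEq V]

def cycleEdges {ℓ : ℕ} (f : Fin ℓ → V) : Finset (Sym2 V) :=
  univ.image fun j => s(f j, f (finRotate ℓ j))

lemma card_cycleEdges {ℓ : ℕ} {f : Fin ℓ → V} (hℓ : 3 ≤ ℓ) (hf : Injective f) :
    #(cycleEdges f) = ℓ := by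
  rw [cycleEdges, card_image_of_injective _ ?_, card_univ, Fintype.card_fin]
  intro a b hab
  simp only [Sym2.eq_iff, hf.eq_iff] at hab
  rcases hab with ⟨h, -⟩ | ⟨h₁, h₂⟩
  · exact h
  · have h₁ := congrArg Fin.val h₁
    have h₂ := congrArg Fin.val h₂
    rw [val_finRotate] at h₁ h₂
    split_ifs at h₁ h₂ <;> omega

open scoped Classical in
/-- A cycle of length `ℓ` is recorded as an injective `f : Fin ℓ → V` with each `f j` adjacent to
`f (j + 1)` (indices mod `ℓ`); every cycle is counted `2ℓ` times, which the first-moment bound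
tolerates. -/
noncomputable def shortCycles [Fintype V] (G : SimpleGraph V) (g : ℕ) :
    Finset (Σ ℓ, Fin ℓ → V) :=
  {c ∈ (Ico 3 g).sigma fun ℓ => {f : Fin ℓ → V | Injective f} |
    ∀ j, G.Adj (c.2 j) (c.2 (finRotate c.1 j))}

lemma mem_shortCycles_of_isCycle [Fintype V] {g : ℕ} {a : V} {w : G.Walk a a} (hw : w.IsCycle)
    (hg : w.length < g) :
    (⟨w.length, fun j => w.getVert j⟩ : Σ ℓ, Fin ℓ → V) ∈ G.shortCycles g := by
  have h3 := hw.three_le_length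
  have hrot : ∀ j : Fin w.length, w.getVert (finRotate _ j) = w.getVert (j + 1) := fun j => by
    rw [val_finRotate]
    split_ifs with h
    · rw [h, Walk.getVert_zero, Walk.getVert_length]
    · rfl
  simp only [shortCycles, mem_filter, mem_sigma, mem_Ico, mem_univ, true_and, hrot]
  refine ⟨⟨⟨h3, hg⟩, fun i j hij => Fin.ext <| hw.getVert_injOn' ?_ ?_ hij⟩,
    fun j => w.adj_getVert_succ j.2⟩
  · simp only [Set.mem_ofPred_eq]; omega
  · simp only [Set.mem_ofPred_eq]; omega

lemma le_egirth_induce_compl [Fintype V] {g : ℕ} {D : Set V}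
    (hD : ∀ c ∈ G.shortCycles g, ∃ j, c.2 j ∈ D) :
    (g : ℕ∞) ≤ (G.induce Dᶜ).egirth := by
  refine le_egirth.mpr fun a w hw => ?_
  by_contra! hlt
  let e := Embedding.induce (G := G) Dᶜ
  have hw' : (w.map e.toHom).IsCycle := (Walk.isCycle_map_iff_of_injective e.injective).mpr hw
  obtain ⟨j, hj⟩ := hD _ (mem_shortCycles_of_isCycle hw' (by simpa using hlt))
  simp only [Walk.getVert_map] at hj
  exact (w.getVert j).2 hj

/-- The coins `ω e` on diagonal elements `e` of `Sym2 V` are ignored. -/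
def randomGraph (ω : Sym2 V → Bool) : SimpleGraph V := fromEdgeSet {e | ω e}

open BernoulliProduct

variable [Fintype V] {p : ℝ}

lemma prob_forall_adj_finRotate_le (hp₀ : 0 ≤ p) (hp₁ : p ≤ 1) {ℓ : ℕ} (hℓ : 3 ≤ ℓ)
    {f : Fin ℓ → V} (hf : Injective f) :
    prob p (fun ω : Sym2 V → Bool => ∀ j, (randomGraph ω).Adj (f j) (f (finRotate ℓ j))) ≤
      p ^ ℓ :=
  calc _ ≤ prob p (fun ω => ∀ e ∈ cycleEdges f, ω e = true) :=
        prob_mono hp₀ hp₁ fun ω h e he => by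
          obtain ⟨j, -, rfl⟩ := mem_image.mp he
          exact ((fromEdgeSet_adj _).mp (h j)).1
    _ = p ^ ℓ := by rw [prob_forall_eq, card_cycleEdges hℓ hf, if_pos rfl]

lemma sum_weight_mul_card_shortCycles_le (hp₀ : 0 ≤ p) (hp₁ : p ≤ 1) (g : ℕ) :
    ∑ ω : Sym2 V → Bool, weight p ω * #((randomGraph ω).shortCycles g) ≤
      ∑ ℓ ∈ Ico 3 g, ((Fintype.card V : ℝ) * p) ^ ℓ := by
  simp only [shortCycles]
  rw [sum_weight_mul_card_filter, sum_sigma]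
  refine sum_le_sum fun ℓ hℓ => ?_
  calc _ ≤ ∑ f ∈ {f : Fin ℓ → V | Injective f}, p ^ ℓ :=
        sum_le_sum fun f hf =>
          prob_forall_adj_finRotate_le hp₀ hp₁ (mem_Ico.mp hℓ).1 (mem_filter.mp hf).2
    _ ≤ ∑ f : Fin ℓ → V, p ^ ℓ := sum_le_sum_of_subset_of_nonneg (filter_subset _ _)
        fun _ _ _ => pow_nonneg hp₀ ℓ
    _ = _ := by simp [mul_pow]

lemma prob_le_indepNum_le (hp₀ : 0 ≤ p) (hp₁ : p ≤ 1) (t : ℕ) :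
    prob p (fun ω : Sym2 V → Bool => t ≤ (randomGraph ω).indepNum) ≤
      2 ^ Fintype.card V * Real.exp (-(p * t.choose 2)) := by
  calc _ ≤ prob p (fun ω => ∃ s ∈ powersetCard t univ,
          ∀ e ∈ s.offDiag.image (uncurry Sym2.mk), ω e = false) :=
        prob_mono hp₀ hp₁ fun ω h => by
          obtain ⟨s, hs⟩ := exists_isNIndepSet_of_le_indepNum h
          refine ⟨s, mem_powersetCard.mpr ⟨subset_univ s, hs.card_eq⟩, fun e he => ?_⟩
          obtain ⟨⟨a, b⟩, hab, rfl⟩ := mem_image.mp he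
          obtain ⟨ha, hb, hne⟩ := mem_offDiag.mp hab
          have := hs.isIndepSet ha hb hne
          simpa [randomGraph, fromEdgeSet_adj, hne] using this
    _ ≤ ∑ s ∈ powersetCard t (univ : Finset V), (1 - p) ^ t.choose 2 := by
        refine (prob_exists_le hp₀ hp₁ _ _).trans (sum_le_sum fun s hs => ?_)
        rw [prob_forall_eq, Sym2.card_image_offDiag, (mem_powersetCard.mp hs).2, if_neg (by simp)]
    _ ≤ 2 ^ Fintype.card V * Real.exp (-(p * t.choose 2)) := by
        rw [sum_const, card_powersetCard, card_univ, nsmul_eq_mul]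
        gcongr
        · exact_mod_cast Nat.choose_le_two_pow _ _
        · calc (1 - p) ^ t.choose 2 ≤ Real.exp (-p) ^ t.choose 2 :=
                pow_le_pow_left₀ (by linarith) (Real.one_sub_le_exp_neg p) _
            _ = Real.exp (-(p * t.choose 2)) := by rw [← Real.exp_nat_mul]; ring_nf

theorem exists_card_shortCycles_lt_indepNum_lt {n g t : ℕ} {p : ℝ} (hp₀ : 0 ≤ p)
    (hp₁ : p ≤ 1) (hn : 0 < n) (hcyc : 4 * ∑ ℓ ∈ Ico 3 g, ((n : ℝ) * p) ^ ℓ ≤ n)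
    (hind : (n : ℝ) + 1 ≤ p * t.choose 2) :
    ∃ G : SimpleGraph (Fin n), 2 * #(G.shortCycles g) < n ∧ G.indepNum < t := by
  have hmany : prob p (fun ω : Sym2 (Fin n) → Bool =>
      (n : ℝ) / 2 ≤ #((randomGraph ω).shortCycles g)) ≤ 1 / 2 := by
    have hn' : (0 : ℝ) < n := by exact_mod_cast hn
    calc _ ≤ (∑ ω : Sym2 (Fin n) → Bool, weight p ω * #((randomGraph ω).shortCycles g)) /
          (n / 2) :=
          prob_le_div_of_nonneg hp₀ hp₁ (fun ω => by positivity) (by positivity)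
      _ ≤ (n / 4) / (n / 2) := by
          gcongr
          have := sum_weight_mul_card_shortCycles_le (V := Fin n) hp₀ hp₁ g
          rw [Fintype.card_fin] at this
          linarith
      _ = 1 / 2 := by field_simp; norm_num
  have hindep := (prob_le_indepNum_le (V := Fin n) hp₀ hp₁ t).trans_lt
    (by simpa using two_pow_mul_exp_neg_lt n hind)
  obtain ⟨ω, hω⟩ := exists_not_of_prob_lt_one
    ((prob_or_le hp₀ hp₁ (fun ω => (n : ℝ) / 2 ≤ #((randomGraph ω).shortCycles g))
      (fun ω => t ≤ (randomGraph ω).indepNum)).trans_lt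
      ((add_lt_add_of_le_of_lt hmany hindep).trans_eq (by norm_num)))
  push Not at hω
  exact ⟨randomGraph ω, by exact_mod_cast (lt_div_iff₀' two_pos).mp hω.1, hω.2⟩

theorem exists_le_egirth_le_chromaticNumber_induce {g k t : ℕ} (G : SimpleGraph V)
    (hcyc : 2 * #(G.shortCycles g) < Fintype.card V) (hind : G.indepNum < t)
    (hkt : 2 * k * t ≤ Fintype.card V) :
    ∃ D : Set V,
      (g : ℕ∞) ≤ (G.induce Dᶜ).egirth ∧ (k : ℕ∞) ≤ (G.induce Dᶜ).chromaticNumber := by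
  classical
  obtain ⟨D, hDcard, hD⟩ := (G.shortCycles g).exists_card_le_forall_exists_mem
    (r := fun c v => ∃ j, c.2 j = v) fun c hc =>
      have h3 := (mem_Ico.mp (mem_sigma.mp (mem_filter.mp hc).1).1).1
      ⟨c.2 ⟨0, by omega⟩, _, rfl⟩
  refine ⟨D, le_egirth_induce_compl fun c hc => ?_,
    le_chromaticNumber_iff_colorable.mpr fun c hc => ?_⟩
  · obtain ⟨v, hv, j, rfl⟩ := hD c hc
    exact ⟨j, hv⟩
  · have hcard := hc.card_le_mul_indepNum
    simp only [Fintype.card_compl_set, Finset.coe_sort_coe, Fintype.card_coe] at hcard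
    have hα := (G.indepNum_induce_le (↑D)ᶜ).trans_lt hind
    by_contra! hck
    have := Nat.mul_le_mul hck.le hα.le
    rw [mul_assoc] at hkt
    omega

end SimpleGraph

theorem SimpleGraph.exists_le_egirth_le_chromaticNumber (g k : ℕ) :
    ∃ (V : Type) (_ : Fintype V) (G : SimpleGraph V),
      (g : ℕ∞) ≤ G.egirth ∧ (k : ℕ∞) ≤ G.chromaticNumber := by
  set M := 6 * k + 2
  set n := M ^ (2 * g + 2)
  set t := 3 * M ^ (2 * g + 1)
  have hM : (0 : ℝ) < M := by positivity
  have hn : (0 : ℝ) < n := by positivity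
  set p : ℝ := M ^ 2 / n
  have hnp : (n : ℝ) * p = ((M ^ 2 : ℕ) : ℝ) := by push_cast [p]; field_simp
  have hp₁ : p ≤ 1 := by
    rw [div_le_one hn]
    exact_mod_cast Nat.pow_le_pow_right (by omega) (by omega)
  have hcyc : 4 * ∑ ℓ ∈ Ico 3 g, ((n : ℝ) * p) ^ ℓ ≤ n := by
    rw [hnp]
    convert four_mul_sum_pow_le (Nat.pow_le_pow_left (show 2 ≤ M by omega) 2)
      fun ℓ hℓ => (mem_Ico.mp hℓ).2 using 1
    push_cast [n]
    ring
  have hind : (n : ℝ) + 1 ≤ p * t.choose 2 := by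
    have hsq : (3 * (M ^ (2 * g + 1)) ^ 2 : ℕ) ≤ t.choose 2 := three_mul_sq_le_choose_two _
    have h1 : (1 : ℝ) ≤ n := by exact_mod_cast Nat.one_le_pow _ _ (by omega)
    calc (n : ℝ) + 1 ≤ 3 * n := by linarith
      _ = p * (3 * (M ^ (2 * g + 1)) ^ 2 : ℕ) := by push_cast [p, n]; field_simp; ring
      _ ≤ p * t.choose 2 := by gcongr
  have hkt : 2 * k * t ≤ n :=
    calc 2 * k * t = 6 * k * M ^ (2 * g + 1) := by ring
      _ ≤ M * M ^ (2 * g + 1) := by gcongr; omega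
      _ = n := by ring
  obtain ⟨G, hG, hα⟩ := exists_card_shortCycles_lt_indepNum_lt (by positivity) hp₁
    (by positivity) hcyc hind
  obtain ⟨D, hg, hk⟩ := G.exists_le_egirth_le_chromaticNumber_induce (k := k)
    (by simpa using hG) hα (by simpa using hkt)
  exact ⟨_, Fintype.ofFinite _, G.induce Dᶜ, hg, hk⟩

/-- For all g and k there is a finite graph with girth at least g and chromatic number
at least k (Erdős). -/
theorem stmt18 (g k : ℕ) :
    ∃ (V : Type) (_ : Fintype V) (G : SimpleGraph V),
      (g : ℕ∞) ≤ G.girth ∧ (k : ℕ∞) ≤ G.chromaticNumber := by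
  obtain ⟨V, hV, G, hg, hk⟩ := SimpleGraph.exists_le_egirth_le_chromaticNumber g (max k 3)
  -- `girth` is `0` on acyclic graphs; chromatic number at least `3` rules them out.
  have hcyclic : ¬ G.IsAcyclic := fun h => by
    have := hk.trans h.chromaticNumber_le_two
    norm_cast at this
    omega
  refine ⟨V, hV, G, ?_, le_trans (by exact_mod_cast le_max_left k 3) hk⟩
  rwa [SimpleGraph.girth, ENat.natCast_toNat (SimpleGraph.egirth_eq_top.not.mpr hcyclic)]
end
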